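/- arXiv:1903.08852 — 3 statements merged into one kernel-verified Lean document; each statement's English description precedes it below -/
import Mathlib

section
/- Let $\beta > 0$, $0 < \epsilon_0 < 1$, and suppose $\lambda \geq \frac{\epsilon_0}{(1-\epsilon_0)^2} + \left(\frac{\epsilon_0^2}{(1-\epsilon_0)^4} - 2\ln(1-\epsilon_0)\frac{\epsilon_0}{(1-\epsilon_0)^2}\right)^{1/2}$. Then the function $G(c) = \sqrt{\lambda c - c\ln(1-\beta c)}$ is concave on the set of $c > 0$ with $\beta c \leq \epsilon_0$, i.e., $G''(c) \leq 0$ for all such $c$. -/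
/-!
Writing `F c = lam * c - c * log (1 - β c)`, we have `G = √F` and `G'' ≤ 0` iff `2 F F'' ≤ F'²`.
With `u = 1 - β c` and `a = lam - log u` this difference is the identity
`F'² - 2 F F'' = a (a - 2 β c / u²) + (β c / u)²`, so it suffices that `a ≥ 2 β c / u²`.
Since `t ↦ t / (1 - t)²` is increasing on `[0, 1)` and `-log u ≥ 0`, this follows from
`lam ≥ 2 ε₀ / (1 - ε₀)²`, which the hypothesis on `lam` implies.
-/

open Topology Real

theorem deriv_deriv_sqrt_nonpos {f f' : ℝ → ℝ} {f'' x : ℝ}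
    (hf : ∀ᶠ y in 𝓝 x, HasDerivAt f (f' y) y) (hf' : HasDerivAt f' f'' x) (hx : 0 < f x)
    (h : 2 * f x * f'' ≤ f' x ^ 2) :
    deriv (deriv fun y => √(f y)) x ≤ 0 := by
  have hpos : ∀ᶠ y in 𝓝 x, 0 < f y := hf.self_of_nhds.continuousAt.eventually_const_lt hx
  have hderiv : deriv (fun y => √(f y)) =ᶠ[𝓝 x] fun y => f' y / (2 * √(f y)) := by
    filter_upwards [hf, hpos] with y hfy hy
    exact (hfy.sqrt hy.ne').deriv
  have hs : 0 < √(f x) := sqrt_pos.2 hx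
  have hquot : HasDerivAt (fun y => f' y / (2 * √(f y)))
      ((f'' * (2 * √(f x)) - f' x * (2 * (f' x / (2 * √(f x))))) / (2 * √(f x)) ^ 2) x :=
    hf'.div ((hf.self_of_nhds.sqrt hx.ne').const_mul 2) (by positivity)
  rw [hderiv.deriv_eq, hquot.deriv]
  refine div_nonpos_of_nonpos_of_nonneg ?_ (by positivity)
  have hnum : f'' * (2 * √(f x)) - f' x * (2 * (f' x / (2 * √(f x))))
      = (2 * f x * f'' - f' x ^ 2) / √(f x) := by
    field_simp
    rw [sq_sqrt hx.le]
  rw [hnum]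
  exact div_nonpos_of_nonpos_of_nonneg (by linarith) hs.le

theorem hasDerivAt_mul_sub_mul_log_one_sub (lam β x : ℝ) (hx : 1 - β * x ≠ 0) :
    HasDerivAt (fun y => lam * y - y * log (1 - β * y))
      (lam - log (1 - β * x) + β * x / (1 - β * x)) x := by
  have hlin : HasDerivAt (fun y => 1 - β * y) (-β) x := by
    simpa using ((hasDerivAt_id' x).const_mul β).const_sub 1
  have hmul : HasDerivAt (fun y => y * log (1 - β * y))
      (1 * log (1 - β * x) + x * (-β / (1 - β * x))) x := (hasDerivAt_id' x).mul (hlin.log hx)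
  refine (((hasDerivAt_id' x).const_mul lam).sub hmul).congr_deriv ?_
  field_simp
  ring

theorem hasDerivAt_sub_log_one_sub_add_div (lam β x : ℝ) (hx : 1 - β * x ≠ 0) :
    HasDerivAt (fun y => lam - log (1 - β * y) + β * y / (1 - β * y))
      (β / (1 - β * x) + β / (1 - β * x) ^ 2) x := by
  have hlin : HasDerivAt (fun y => 1 - β * y) (-β) x := by
    simpa using ((hasDerivAt_id' x).const_mul β).const_sub 1
  have hdiv : HasDerivAt (fun y => β * y / (1 - β * y))
      ((β * 1 * (1 - β * x) - β * x * -β) / (1 - β * x) ^ 2) x :=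
    ((hasDerivAt_id' x).const_mul β).div hlin hx
  refine (((hlin.log hx).const_sub lam).add hdiv).congr_deriv ?_
  field_simp
  ring

theorem two_mul_mul_le_sq {a β c u : ℝ} (hu : 0 < u) (ha : 0 ≤ a)
    (h : 2 * (β * c) / u ^ 2 ≤ a) :
    2 * (c * a) * (β / u + β / u ^ 2) ≤ (a + β * c / u) ^ 2 := by
  have hid : (a + β * c / u) ^ 2 - 2 * (c * a) * (β / u + β / u ^ 2)
      = a * (a - 2 * (β * c) / u ^ 2) + (β * c / u) ^ 2 := by
    field_simp
    ring
  nlinarith [mul_nonneg ha (sub_nonneg.2 h), sq_nonneg (β * c / u)]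

theorem div_one_sub_sq_le_div_one_sub_sq {s t : ℝ} (hs : 0 ≤ s) (hst : s ≤ t) (ht : t < 1) :
    s / (1 - s) ^ 2 ≤ t / (1 - t) ^ 2 :=
  div_le_div₀ (hs.trans hst) hst (by nlinarith) (pow_le_pow_left₀ (by linarith) (by linarith) 2)

theorem stmt_2 (β ε₀ lam : ℝ) (hβ : 0 < β) (hε : 0 < ε₀) (hε1 : ε₀ < 1)
    (hlam : lam ≥ ε₀ / (1 - ε₀) ^ 2 +
      Real.sqrt (ε₀ ^ 2 / (1 - ε₀) ^ 4 - 2 * Real.log (1 - ε₀) * (ε₀ / (1 - ε₀) ^ 2)))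
    (c : ℝ) (hc : 0 < c) (hcε : β * c ≤ ε₀) :
    deriv (deriv (fun x : ℝ => Real.sqrt (lam * x - x * Real.log (1 - β * x)))) c ≤ 0 := by
  have hlam2 : 2 * (ε₀ / (1 - ε₀) ^ 2) ≤ lam := by
    have hlog : log (1 - ε₀) ≤ 0 := log_nonpos (by linarith) (by linarith)
    have hsq : ε₀ / (1 - ε₀) ^ 2 ≤
        √(ε₀ ^ 2 / (1 - ε₀) ^ 4 - 2 * log (1 - ε₀) * (ε₀ / (1 - ε₀) ^ 2)) := by
      refine le_sqrt_of_sq_le ?_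
      rw [div_pow, ← pow_mul]
      nlinarith [mul_nonneg (neg_nonneg.2 hlog) (by positivity : 0 ≤ ε₀ / (1 - ε₀) ^ 2)]
    linarith
  have hβc : 0 < β * c := mul_pos hβ hc
  have hu : 0 < 1 - β * c := by linarith
  have hL : 0 ≤ -log (1 - β * c) := neg_nonneg.2 (log_nonpos hu.le (by linarith))
  have hkey : 2 * (β * c) / (1 - β * c) ^ 2 ≤ lam - log (1 - β * c) := by
    have := div_one_sub_sq_le_div_one_sub_sq hβc.le hcε hε1
    rw [mul_div_assoc]
    linarith
  have ha : 0 < lam - log (1 - β * c) := lt_of_lt_of_le (by positivity) hkey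
  have hnear : ∀ᶠ y in 𝓝 c, HasDerivAt (fun y => lam * y - y * log (1 - β * y))
      (lam - log (1 - β * y) + β * y / (1 - β * y)) y := by
    have hc1 : c < 1 / β := by rw [lt_div_iff₀ hβ]; linarith
    filter_upwards [Iio_mem_nhds hc1] with y hy
    have : β * y < 1 := by rwa [Set.mem_Iio, lt_div_iff₀' hβ] at hy
    exact hasDerivAt_mul_sub_mul_log_one_sub lam β y (by linarith)
  refine deriv_deriv_sqrt_nonpos hnear
    (hasDerivAt_sub_log_one_sub_add_div lam β c hu.ne') ?_ ?_
  · have := mul_pos hc ha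
    linarith
  · convert two_mul_mul_le_sq hu ha.le hkey using 2
    ring
end

section
/- Let $R, T, \beta > 0$, $0 < \epsilon_0 < 1$, and $\lambda$ satisfy the concavity condition $\lambda \geq \frac{\epsilon_0}{(1-\epsilon_0)^2} + \left(\frac{\epsilon_0^2}{(1-\epsilon_0)^4} - 2\ln(1-\epsilon_0)\frac{\epsilon_0}{(1-\epsilon_0)^2}\right)^{1/2}$. Define $f(c) = -cRT\ln(1-\beta c)$ and $G(c) = \sqrt{\lambda c - c\ln(1-\beta c)}$. Then for all $a, b$ with $0 < a, b$ and $\beta a \leq \epsilon_0$, $\beta b \leq \epsilon_0$, we have $f(b) - f(a) \leq \big[RT\,G'(a)(2G(a) + G'(a)(b-a)) - \lambda RT\big](b - a)$. -/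
/-!
Writing `H c = λ c - c log (1 - β c)`, we have `λ c + f c / (R T) = H c = G c ^ 2`, so the claim
is `R T` times `H b - H a ≤ G'(a) (b - a) (2 G a + G'(a) (b - a))`. This follows by squaring the
tangent-line inequality `G b ≤ G a + G'(a) (b - a)` of the concave function `G = √H`, and `√H` is
concave wherever `2 H H'' ≤ H' ^ 2`. With `u = β c` and `K = λ - log (1 - u)` that inequality
reads `2 K u ≤ K ^ 2 (1 - u) ^ 2 + u ^ 2`, so it suffices that `2 u ≤ λ (1 - u) ^ 2`; the bound
on `λ` gives `λ ≥ 2 ε₀ / (1 - ε₀) ^ 2`, which is enough for `u ≤ ε₀`.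
-/

open Real Set

theorem ConcaveOn.le_add_mul_sub_of_hasDerivAt {S : Set ℝ} {f : ℝ → ℝ} {f' x y : ℝ}
    (hf : ConcaveOn ℝ S f) (hx : x ∈ S) (hy : y ∈ S) (hf' : HasDerivAt f f' x) :
    f y ≤ f x + f' * (y - x) := by
  rcases lt_trichotomy x y with hxy | rfl | hxy
  · have := hf.slope_le_of_hasDerivAt hx hy hxy hf'
    rw [slope_def_field, div_le_iff₀ (sub_pos.2 hxy)] at this
    linarith
  · simp
  · have := hf.le_slope_of_hasDerivAt hy hx hxy hf'
    rw [slope_def_field, le_div_iff₀ (sub_pos.2 hxy)] at this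
    linarith

/-- `(√h)'' = (2 h h'' - h' ^ 2) / (4 h √h)`. -/
theorem concaveOn_sqrt_of_two_mul_mul_le_sq {D : Set ℝ} (hD : Convex ℝ D) {h h' h'' : ℝ → ℝ}
    (hc : ContinuousOn h D) (hd : ∀ x ∈ interior D, HasDerivAt h (h' x) x)
    (hd2 : ∀ x ∈ interior D, HasDerivAt h' (h'' x) x) (hpos : ∀ x ∈ interior D, 0 < h x)
    (hle : ∀ x ∈ interior D, 2 * h x * h'' x ≤ h' x ^ 2) :
    ConcaveOn ℝ D (fun x => √(h x)) := by
  refine concaveOn_of_hasDerivWithinAt2_nonpos hD hc.sqrt (f' := fun x => h' x / (2 * √(h x)))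
    (f'' := fun x => (2 * h x * h'' x - h' x ^ 2) / (4 * h x * √(h x)))
    (fun x hx => ((hd x hx).sqrt (hpos x hx).ne').hasDerivWithinAt) (fun x hx => ?_)
    (fun x hx => div_nonpos_of_nonpos_of_nonneg (by linarith [hle x hx])
      (by have := hpos x hx; positivity))
  have hx0 := hpos x hx
  have hs : 0 < √(h x) := sqrt_pos.2 hx0
  refine (((hd2 x hx).div (((hd x hx).sqrt hx0.ne').const_mul 2) (by positivity)).congr_deriv
    ?_).hasDerivWithinAt
  field_simp
  rw [sq_sqrt hx0.le]
  ring

/-- `λ c + f c / (R T)` for the Peng–Robinson repulsion term `f`. -/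
noncomputable def shiftedRepulsion (β lam c : ℝ) : ℝ := lam * c - c * log (1 - β * c)

noncomputable def shiftedRepulsionDeriv (β lam c : ℝ) : ℝ :=
  lam - log (1 - β * c) + β * c / (1 - β * c)

section ShiftedRepulsion

variable {β lam c : ℝ}

theorem hasDerivAt_shiftedRepulsion (h : β * c < 1) :
    HasDerivAt (shiftedRepulsion β lam) (shiftedRepulsionDeriv β lam c) c := by
  have hv : 1 - β * c ≠ 0 := by linarith
  have hlin : HasDerivAt (fun x => 1 - β * x) (-β) c := by
    simpa using ((hasDerivAt_id c).const_mul β).const_sub 1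
  refine (((hasDerivAt_id' c).const_mul lam).sub ((hasDerivAt_id' c).mul (hlin.log hv))).congr_deriv
    ?_
  unfold shiftedRepulsionDeriv
  field_simp
  ring

theorem hasDerivAt_shiftedRepulsionDeriv (h : β * c < 1) :
    HasDerivAt (shiftedRepulsionDeriv β lam) (β / (1 - β * c) + β / (1 - β * c) ^ 2) c := by
  have hv : 1 - β * c ≠ 0 := by linarith
  have hlin : HasDerivAt (fun x => 1 - β * x) (-β) c := by
    simpa using ((hasDerivAt_id c).const_mul β).const_sub 1
  have hnum : HasDerivAt (fun x => β * x) β c := by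
    simpa using (hasDerivAt_id c).const_mul β
  refine (((hasDerivAt_const c lam).sub (hlin.log hv)).add (hnum.div hlin hv)).congr_deriv ?_
  field_simp
  ring

theorem shiftedRepulsion_pos (hlam : 0 < lam) (hβ : 0 ≤ β) (hc : 0 < c) (h : β * c < 1) :
    0 < shiftedRepulsion β lam c := by
  have hlog : log (1 - β * c) ≤ 0 := log_nonpos (by nlinarith) (by nlinarith)
  unfold shiftedRepulsion
  nlinarith [mul_pos hlam hc]

theorem two_mul_shiftedRepulsion_mul_le_sq (hu : 0 ≤ β * c) (hu1 : β * c < 1)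
    (hlam : 2 * (β * c) / (1 - β * c) ^ 2 ≤ lam) :
    2 * shiftedRepulsion β lam c * (β / (1 - β * c) + β / (1 - β * c) ^ 2) ≤
      shiftedRepulsionDeriv β lam c ^ 2 := by
  unfold shiftedRepulsion shiftedRepulsionDeriv
  set u := β * c
  set v := 1 - u
  have hv : 0 < v := by linarith
  set K := lam - log v
  have hL : log v ≤ 0 := log_nonpos hv.le (by linarith)
  have hKv : 2 * u ≤ K * v ^ 2 := by
    rw [div_le_iff₀ (by positivity)] at hlam
    nlinarith [mul_nonneg (neg_nonneg.2 hL) (sq_nonneg v)]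
  have hK : 0 ≤ K := by
    have : 0 ≤ 2 * u / v ^ 2 := by positivity
    linarith
  have hH : lam * c - c * log v = c * K := by ring
  have hlhs : 2 * (c * K) * (β / v + β / v ^ 2) = 2 * K * u * (v + 1) / v ^ 2 := by
    field_simp
    ring
  have hrhs : (K + u / v) ^ 2 = (K * v + u) ^ 2 / v ^ 2 := by
    field_simp
  rw [hH, hlhs, hrhs]
  gcongr
  nlinarith [mul_le_mul_of_nonneg_left hKv hK, sq_nonneg u]

theorem concaveOn_sqrt_shiftedRepulsion {ε₀ : ℝ} (hβ : 0 < β) (hε : 0 < ε₀) (hε1 : ε₀ < 1)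
    (hlam : 2 * ε₀ / (1 - ε₀) ^ 2 ≤ lam) :
    ConcaveOn ℝ (Icc 0 (ε₀ / β)) (fun x => √(shiftedRepulsion β lam x)) := by
  have hlam0 : 0 < lam := lt_of_lt_of_le (div_pos (by linarith) (by nlinarith)) hlam
  have hmem : ∀ x ∈ Icc 0 (ε₀ / β), β * x < 1 := fun x hx => by
    have := (le_div_iff₀ hβ).1 hx.2; linarith
  have hint : ∀ x ∈ interior (Icc 0 (ε₀ / β)), 0 < x ∧ β * x ≤ ε₀ := by
    rw [interior_Icc]
    exact fun x hx => ⟨hx.1, by have := (lt_div_iff₀ hβ).1 hx.2; linarith⟩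
  refine concaveOn_sqrt_of_two_mul_mul_le_sq (convex_Icc _ _)
    (fun x hx => (hasDerivAt_shiftedRepulsion (hmem x hx)).continuousAt.continuousWithinAt)
    (fun x hx => hasDerivAt_shiftedRepulsion (by linarith [hint x hx]))
    (fun x hx => hasDerivAt_shiftedRepulsionDeriv (by linarith [hint x hx]))
    (fun x hx => shiftedRepulsion_pos hlam0 hβ.le (hint x hx).1 (by linarith [hint x hx]))
    (fun x hx => ?_)
  obtain ⟨hx0, huε⟩ := hint x hx
  have hu : 0 ≤ β * x := by positivity
  refine two_mul_shiftedRepulsion_mul_le_sq hu (by linarith) (le_trans ?_ hlam)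
  gcongr

end ShiftedRepulsion

theorem two_mul_div_one_sub_sq_le {ε₀ lam : ℝ} (hε : 0 < ε₀) (hε1 : ε₀ < 1)
    (hlam : lam ≥ ε₀ / (1 - ε₀) ^ 2 +
      √(ε₀ ^ 2 / (1 - ε₀) ^ 4 - 2 * log (1 - ε₀) * (ε₀ / (1 - ε₀) ^ 2))) :
    2 * ε₀ / (1 - ε₀) ^ 2 ≤ lam := by
  have hlog : log (1 - ε₀) < 0 := log_neg (by linarith) (by linarith)
  have hsqrt : ε₀ / (1 - ε₀) ^ 2 ≤
      √(ε₀ ^ 2 / (1 - ε₀) ^ 4 - 2 * log (1 - ε₀) * (ε₀ / (1 - ε₀) ^ 2)) := by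
    refine le_sqrt_of_sq_le ?_
    have : 0 ≤ ε₀ / (1 - ε₀) ^ 2 := by positivity
    rw [div_pow, ← pow_mul]
    nlinarith
  linarith [show 2 * ε₀ / (1 - ε₀) ^ 2 = ε₀ / (1 - ε₀) ^ 2 + ε₀ / (1 - ε₀) ^ 2 by ring]

theorem stmt_5 (R T β ε₀ lam : ℝ) (hR : 0 < R) (hT : 0 < T) (hβ : 0 < β)
    (hε : 0 < ε₀) (hε1 : ε₀ < 1)
    (hlam : lam ≥ ε₀ / (1 - ε₀) ^ 2 +
      Real.sqrt (ε₀ ^ 2 / (1 - ε₀) ^ 4 - 2 * Real.log (1 - ε₀) * (ε₀ / (1 - ε₀) ^ 2)))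
    (G f : ℝ → ℝ)
    (hG : G = fun c : ℝ => Real.sqrt (lam * c - c * Real.log (1 - β * c)))
    (hf : f = fun c : ℝ => -(c * R * T * Real.log (1 - β * c)))
    (a b : ℝ) (ha : 0 < a) (hb : 0 < b) (haε : β * a ≤ ε₀) (hbε : β * b ≤ ε₀) :
    f b - f a ≤
      (R * T * deriv G a * (2 * G a + deriv G a * (b - a)) - lam * R * T) * (b - a) := by
  have hlam2 := two_mul_div_one_sub_sq_le hε hε1 hlam
  have hlam0 : 0 < lam := lt_of_lt_of_le (div_pos (by linarith) (by nlinarith)) hlam2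
  have hHa := shiftedRepulsion_pos hlam0 hβ.le ha (by linarith)
  have hHb := shiftedRepulsion_pos hlam0 hβ.le hb (by linarith)
  have hGa : HasDerivAt G (deriv G a) a := by
    rw [hG]
    exact ((hasDerivAt_shiftedRepulsion (lam := lam) (by linarith)).sqrt hHa.ne').differentiableAt
      |>.hasDerivAt
  have hmem : ∀ {c}, 0 < c → β * c ≤ ε₀ → c ∈ Icc 0 (ε₀ / β) := fun hc hcε =>
    ⟨hc.le, (le_div_iff₀ hβ).2 (by linarith)⟩
  have htangent : G b ≤ G a + deriv G a * (b - a) := by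
    subst hG
    exact (concaveOn_sqrt_shiftedRepulsion hβ hε hε1 hlam2).le_add_mul_sub_of_hasDerivAt
      (hmem ha haε) (hmem hb hbε) hGa
  have hGa2 : G a ^ 2 = shiftedRepulsion β lam a := by rw [hG]; exact sq_sqrt hHa.le
  have hGb2 : G b ^ 2 = shiftedRepulsion β lam b := by rw [hG]; exact sq_sqrt hHb.le
  have hGb0 : 0 ≤ G b := by rw [hG]; positivity
  have hsq : shiftedRepulsion β lam b - shiftedRepulsion β lam a ≤
      deriv G a * (b - a) * (2 * G a + deriv G a * (b - a)) := by
    nlinarith [pow_le_pow_left₀ hGb0 htangent 2]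
  calc f b - f a
      = R * T * (shiftedRepulsion β lam b - shiftedRepulsion β lam a) - lam * R * T * (b - a) := by
        rw [hf]; unfold shiftedRepulsion; ring
    _ ≤ R * T * (deriv G a * (b - a) * (2 * G a + deriv G a * (b - a)))
          - lam * R * T * (b - a) := by
        gcongr
    _ = _ := by ring
end

section
/- Let $\alpha, \beta > 0$ and define $f(c) = \frac{\alpha c}{2\sqrt{2}\beta}\ln\left(\frac{1 + (1-\sqrt{2})\beta c}{1 + (1+\sqrt{2})\beta c}\right)$ on $c > 0$ (where $1 + (1-\sqrt{2})\beta c > 0$). Then $f$ is concave, i.e., $f''(c) \leq 0$ wherever defined with $1 + (1-\sqrt{2})\beta c > 0$. -/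
/-! Writing `f(x) = K · x · log((1 + a x)/(1 + b x))` with `K = α/(2√2β)`, `a = (1 - √2)β`,
`b = (1 + √2)β`, a direct computation gives
`(x log((1 + a x)/(1 + b x)))'' = (a - b)(2 + (a + b)x) / ((1 + a x)(1 + b x))²`.
Here `a - b = -2√2β < 0` and `2 + (a + b)x = 2(1 + βx) > 0`, so `f'' ≤ 0`. -/

open Real Filter Topology

theorem hasDerivAt_one_add_mul (k x : ℝ) : HasDerivAt (fun y => 1 + k * y) k x := by
  simpa using ((hasDerivAt_id' x).const_mul k).const_add 1

section MulLogLinearRatio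

variable {a b x : ℝ}

theorem hasDerivAt_log_linear_ratio (ha : 1 + a * x ≠ 0) (hb : 1 + b * x ≠ 0) :
    HasDerivAt (fun y => log ((1 + a * y) / (1 + b * y)))
      ((a - b) / ((1 + a * x) * (1 + b * x))) x := by
  convert ((hasDerivAt_one_add_mul a x).fun_div (hasDerivAt_one_add_mul b x) hb).log
    (div_ne_zero ha hb) using 1
  field_simp
  ring

theorem hasDerivAt_mul_log_linear_ratio (ha : 1 + a * x ≠ 0) (hb : 1 + b * x ≠ 0) :
    HasDerivAt (fun y => y * log ((1 + a * y) / (1 + b * y)))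
      (log ((1 + a * x) / (1 + b * x)) + (a - b) * x / ((1 + a * x) * (1 + b * x))) x :=
  ((hasDerivAt_id' x).fun_mul (hasDerivAt_log_linear_ratio ha hb)).congr_deriv (by ring)

theorem deriv_mul_log_linear_ratio_eventuallyEq (ha : 1 + a * x ≠ 0) (hb : 1 + b * x ≠ 0) :
    deriv (fun y => y * log ((1 + a * y) / (1 + b * y))) =ᶠ[𝓝 x]
      fun y => log ((1 + a * y) / (1 + b * y)) + (a - b) * y / ((1 + a * y) * (1 + b * y)) := by
  have hcont : ∀ k : ℝ, ContinuousAt (fun y => 1 + k * y) x := fun k => by fun_prop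
  filter_upwards [(hcont a).eventually_ne ha, (hcont b).eventually_ne hb] with y hay hby
  exact (hasDerivAt_mul_log_linear_ratio hay hby).deriv

theorem hasDerivAt_deriv_mul_log_linear_ratio (ha : 1 + a * x ≠ 0) (hb : 1 + b * x ≠ 0) :
    HasDerivAt (deriv fun y => y * log ((1 + a * y) / (1 + b * y)))
      ((a - b) * (2 + (a + b) * x) / ((1 + a * x) * (1 + b * x)) ^ 2) x := by
  have hfrac := ((hasDerivAt_id' x).const_mul (a - b)).fun_div
    ((hasDerivAt_one_add_mul a x).fun_mul (hasDerivAt_one_add_mul b x)) (mul_ne_zero ha hb)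
  refine HasDerivAt.congr_of_eventuallyEq ?_ (deriv_mul_log_linear_ratio_eventuallyEq ha hb)
  convert (hasDerivAt_log_linear_ratio ha hb).fun_add hfrac using 1
  field_simp
  ring

end MulLogLinearRatio

theorem stmt_6 (α β : ℝ) (hα : 0 < α) (hβ : 0 < β) (c : ℝ) (hc : 0 < c)
    (hdom : 0 < 1 + (1 - Real.sqrt 2) * β * c) :
    deriv (deriv (fun x : ℝ => α * x / (2 * Real.sqrt 2 * β) *
      Real.log ((1 + (1 - Real.sqrt 2) * β * x) / (1 + (1 + Real.sqrt 2) * β * x)))) c ≤ 0 := by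
  have hb : 0 < 1 + (1 + √2) * β * c := by positivity
  have hscale : (fun x : ℝ => α * x / (2 * √2 * β) *
      log ((1 + (1 - √2) * β * x) / (1 + (1 + √2) * β * x))) =
      fun x => α / (2 * √2 * β) * (x * log ((1 + (1 - √2) * β * x) / (1 + (1 + √2) * β * x))) := by
    funext x
    ring
  rw [hscale, deriv_const_mul_field', deriv_const_mul_field']
  beta_reduce
  rw [(hasDerivAt_deriv_mul_log_linear_ratio hdom.ne' hb.ne').deriv]
  have hnum : ((1 - √2) * β - (1 + √2) * β) * (2 + ((1 - √2) * β + (1 + √2) * β) * c) =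
      -(4 * √2 * β * (1 + β * c)) := by ring
  rw [hnum, neg_div]
  exact mul_nonpos_of_nonneg_of_nonpos (by positivity) (neg_nonpos.mpr (by positivity))
end
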